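/- arXiv:2106.10742 — 4 statements merged into one kernel-verified Lean document; each statement's English description precedes it below -/
import Mathlib

section
/- Let M and N be chain complexes of R-modules such that N_n lies in the subprojectivity domain of M_n (as modules) for every integer n, and suppose N lies in the subprojectivity domain of M in the category of complexes. Then for every short exact sequence of complexes 0 → K → P → N → 0 with P a projective complex, every chain map M[-1] → K is null-homotopic, i.e., Hom_{K(R)}(M[-1], K) = 0. -/
open CategoryTheory CategoryTheory.Limits

universe u

/-- `N` belongs to the subprojectivity domain of `M`: every morphism `M ⟶ N` factors
through a projective object. -/
def SubprojDomain {A : Type*} [Category A] (M N : A) : Prop :=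
  ∀ f : M ⟶ N, ∃ (P : A) (_ : Projective P) (a : M ⟶ P) (b : P ⟶ N), a ≫ b = f

/-- The shift `M[-1]` of a chain complex: `M[-1]ᵢ = M_{i+1}` with differential `-d`. -/
def shiftNegOne {R : Type u} [Ring R] (M : ChainComplex (ModuleCat.{u} R) ℤ) :
    ChainComplex (ModuleCat.{u} R) ℤ where
  X i := M.X (i + 1)
  d i j := -(M.d (i + 1) (j + 1))
  shape i j h := by
    have : ¬ (ComplexShape.down ℤ).Rel (i + 1) (j + 1) := by
      simp only [ComplexShape.down_Rel] at h ⊢; omega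
    rw [M.shape _ _ this, neg_zero]
  d_comp_d' i j k _ _ := by simp

/-!
Since `P` is contractible, `g ≫ ι` (with `ι : K ⟶ P` the kernel of `p`) has a null-homotopy `s`,
whose components are maps `M[-1]ᵢ = M_{i+1} ⟶ P_{i+1}`. As `g ≫ ι ≫ p = 0`, the maps `s ≫ p`
assemble into a chain map `u : M ⟶ N`. Since `N` lies in the subprojectivity domain of `M`, `u`
factors through a projective complex and hence lifts along the epimorphism `p` to `v : M ⟶ P`.
A chain map `M ⟶ P` is the same thing as a null-homotopy of `0 : M[-1] ⟶ P`, so `s - v` is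
another null-homotopy of `g ≫ ι`; its components are killed by `p`, so they factor through
`K` and give a null-homotopy of `g`.
-/

noncomputable section

open HomologicalComplex

namespace ChainComplex

variable {V : Type*} [Category V] [Preadditive V]

lemma dNext_add_prevD {X Y : ChainComplex V ℤ} (φ : ∀ i j, X.X i ⟶ Y.X j) (n : ℤ) :
    dNext n φ + prevD n φ = X.d n (n - 1) ≫ φ (n - 1) n + φ n (n + 1) ≫ Y.d (n + 1) n := by
  rw [dNext_eq _ (show (ComplexShape.down ℤ).Rel n (n - 1) by simp),
    prevD_eq _ (show (ComplexShape.down ℤ).Rel (n + 1) n by simp)]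

lemma XIsoOfEq_hom_comp_add_one {X : ChainComplex V ℤ} {Z : V} (φ : ∀ i, X.X (i + 1) ⟶ Z)
    {i k : ℤ} (hik : i = k) (h : i + 1 = k + 1) : (X.XIsoOfEq h).hom ≫ φ k = φ i := by
  subst hik
  simp

end ChainComplex

namespace Homotopy

variable {V : Type*} [Category V] [Preadditive V] {ι : Type*} {c : ComplexShape ι}

def ofCompMono {X K P : HomologicalComplex V c} {f : X ⟶ K} {m : K ⟶ P}
    (hm : ∀ j, Mono (m.f j)) (h : Homotopy (f ≫ m) 0) (hom : ∀ i j, X.X i ⟶ K.X j)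
    (fac : ∀ i j, hom i j ≫ m.f j = h.hom i j) : Homotopy f 0 where
  hom := hom
  zero i j hij := by
    rw [← cancel_mono (m.f j), fac, h.zero i j hij, zero_comp]
  comm i := by
    have hom_eq : h.hom = fun i j => hom i j ≫ m.f j := funext₂ fun i j => (fac i j).symm
    have := h.comm i
    rw [hom_eq, dNext_comp_right, prevD_comp_right] at this
    rw [← cancel_mono (m.f i)]
    simpa only [comp_f, zero_f, Preadditive.add_comp, zero_comp] using this

def ofCompKernelι [HasLimitsOfShape WalkingParallelPair V] {X P N : HomologicalComplex V c}
    {p : P ⟶ N} {f : X ⟶ kernel p} (h : Homotopy (f ≫ kernel.ι p) 0)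
    (hp : ∀ i j, h.hom i j ≫ p.f j = 0) : Homotopy f 0 :=
  let hker (j : ι) := isLimitOfHasKernelOfPreservesLimit (eval V c j) p
  ofCompMono (fun j => Fork.IsLimit.mono (hker j)) h
    (fun i j => (KernelFork.IsLimit.lift' (hker j) _ (hp i j)).1)
    (fun i j => (KernelFork.IsLimit.lift' (hker j) _ (hp i j)).2)

end Homotopy

namespace ChainComplex

variable {V : Type*} [Category V] [Preadditive V] [HasBinaryBiproducts V]

/-- The contractible complex with `X n = P.X n ⊞ P.X (n + 1)` and differential
`(a, b) ↦ (0, a)`, which covers `P`. -/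
def contractibleCover (P : ChainComplex V ℤ) : ChainComplex V ℤ where
  X n := P.X n ⊞ P.X (n + 1)
  d i j := if h : j + 1 = i then biprod.fst ≫ (P.XIsoOfEq h.symm).hom ≫ biprod.inr else 0
  shape i j h := dif_neg (by simpa using h)
  d_comp_d' i j k hij hjk := by
    rw [dif_pos (by simpa using hij), dif_pos (by simpa using hjk)]
    simp

def contractibleCoverπ (P : ChainComplex V ℤ) : contractibleCover P ⟶ P where
  f n := biprod.fst + biprod.snd ≫ P.d (n + 1) n
  comm' i j hij := by
    obtain rfl : j + 1 = i := by simpa using hij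
    simp [contractibleCover]

instance (P : ChainComplex V ℤ) : Epi (contractibleCoverπ P) :=
  epi_of_epi_f _ fun n => (IsSplitEpi.mk' (f := (contractibleCoverπ P).f n)
    ⟨biprod.inl, show biprod.inl ≫ (biprod.fst + biprod.snd ≫ P.d (n + 1) n) = _ by simp⟩).epi

def contractibleCoverHomotopy (P : ChainComplex V ℤ) :
    Homotopy (𝟙 (contractibleCover P)) 0 where
  hom i j := if h : j = i + 1 then biprod.snd ≫ (P.XIsoOfEq h.symm).hom ≫ biprod.inl else 0
  zero i j hij := dif_neg fun h => hij (by simpa using h.symm)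
  comm n := by
    rw [dNext_add_prevD, zero_f, add_zero]
    dsimp only [contractibleCover]
    simp only [sub_add_cancel, XIsoOfEq_rfl, Iso.refl_hom, Category.id_comp,
      Category.assoc, BinaryBicone.inr_snd_assoc, BinaryBicone.inl_fst_assoc,
      XIsoOfEq_hom_comp_XIsoOfEq_hom_assoc, ↓reduceDIte]
    exact biprod.total.symm

/-- A projective complex is a retract of its contractible cover, hence contractible. -/
def homotopyIdZeroOfProjective (P : ChainComplex V ℤ) [Projective P] : Homotopy (𝟙 P) 0 :=
  let σ := Projective.factorThru (𝟙 P) (contractibleCoverπ P)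
  (Homotopy.ofEq (by simp [σ])).trans
    ((((contractibleCoverHomotopy P).compRight (contractibleCoverπ P)).compLeft σ).trans
      (Homotopy.ofEq (by simp)))

def nullHomotopyOfProjective {X P : ChainComplex V ℤ} [Projective P] (f : X ⟶ P) :
    Homotopy f 0 :=
  (Homotopy.ofEq (Category.comp_id f).symm).trans
    (((homotopyIdZeroOfProjective P).compLeft f).trans (Homotopy.ofEq (by simp)))

end ChainComplex

section ShiftNegOne

variable {R : Type u} [Ring R] {M P N : ChainComplex (ModuleCat.{u} R) ℤ}

lemma shiftNegOne_d_comp {Z : ModuleCat.{u} R} (i j : ℤ) (φ : (shiftNegOne M).X j ⟶ Z) :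
    (shiftNegOne M).d i j ≫ φ = -(M.d (i + 1) (j + 1) ≫ φ) :=
  Preadditive.neg_comp _ _

def nullHomotopyOfChainMap (v : M ⟶ P) : Homotopy (0 : shiftNegOne M ⟶ P) 0 where
  hom i j := if h : i + 1 = j then v.f (i + 1) ≫ (P.XIsoOfEq h).hom else 0
  zero i j hij := dif_neg (by simpa using hij)
  comm n := by
    have hv : M.d (n + 1) (n - 1 + 1) ≫ v.f (n - 1 + 1) ≫ (P.XIsoOfEq (by omega)).hom =
        (v.f (n + 1) ≫ (P.XIsoOfEq rfl).hom) ≫ P.d (n + 1) n := by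
      rw [← Hom.comm_assoc, d_comp_XIsoOfEq_hom, XIsoOfEq_rfl, Iso.refl_hom, Category.comp_id]
    rw [ChainComplex.dNext_add_prevD, dif_pos (by omega), dif_pos rfl, shiftNegOne_d_comp,
      zero_f, add_zero]
    exact (neg_add_eq_zero.mpr hv).symm

lemma nullHomotopyOfChainMap_hom (v : M ⟶ P) (i : ℤ) :
    (nullHomotopyOfChainMap v).hom i (i + 1) = v.f (i + 1) :=
  (dif_pos rfl).trans (Category.comp_id _)

def chainMapOfNullHomotopy {f : shiftNegOne M ⟶ P} (s : Homotopy f 0) (p : P ⟶ N)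
    (hf : f ≫ p = 0) : M ⟶ N where
  f m := (M.XIsoOfEq (by omega : m = m - 1 + 1)).hom ≫ s.hom (m - 1) m ≫ p.f m
  comm' a b hab := by
    obtain rfl : b + 1 = a := by simpa using hab
    have hb : f.f b ≫ p.f b = 0 := by rw [← comp_f, hf, zero_f]
    rw [s.comm b, ChainComplex.dNext_add_prevD, zero_f, add_zero, Preadditive.add_comp,
      Category.assoc, shiftNegOne_d_comp, Category.assoc, ← p.comm] at hb
    rw [ChainComplex.XIsoOfEq_hom_comp_add_one (fun k => s.hom k (b + 1) ≫ p.f (b + 1))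
      (by omega), d_comp_XIsoOfEq_hom_assoc]
    exact (Category.assoc _ _ _).trans (neg_add_eq_zero.mp hb).symm

lemma chainMapOfNullHomotopy_f {f : shiftNegOne M ⟶ P} (s : Homotopy f 0) (p : P ⟶ N)
    (hf : f ≫ p = 0) (i : ℤ) :
    (chainMapOfNullHomotopy s p hf).f (i + 1) = s.hom i (i + 1) ≫ p.f (i + 1) :=
  ChainComplex.XIsoOfEq_hom_comp_add_one (fun k => s.hom k (i + 1) ≫ p.f (i + 1)) (by omega) _

lemma trans_symm_nullHomotopyOfChainMap_hom_comp_eq_zero {f : shiftNegOne M ⟶ P}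
    (s : Homotopy f 0) {p : P ⟶ N} (hf : f ≫ p = 0) {v : M ⟶ P}
    (hv : v ≫ p = chainMapOfNullHomotopy s p hf) (i j : ℤ) :
    (s.trans (nullHomotopyOfChainMap v).symm).hom i j ≫ p.f j = 0 := by
  by_cases hij : i + 1 = j
  · subst hij
    have hvp : v.f (i + 1) ≫ p.f (i + 1) = s.hom i (i + 1) ≫ p.f (i + 1) := by
      rw [← comp_f, hv, chainMapOfNullHomotopy_f]
    rw [Homotopy.trans_hom, Homotopy.symm_hom, Preadditive.add_comp,
      Preadditive.neg_comp, nullHomotopyOfChainMap_hom]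
    exact add_neg_eq_zero.mpr hvp.symm
  · have hs : s.hom i j = 0 := s.zero i j (by simpa using hij)
    simp [hs, nullHomotopyOfChainMap, hij]

end ShiftNegOne

lemma SubprojDomain.exists_lift {A : Type*} [Category A] {M N P : A} (h : SubprojDomain M N)
    (p : P ⟶ N) [Epi p] (u : M ⟶ N) : ∃ v : M ⟶ P, v ≫ p = u := by
  obtain ⟨Q, _, a, b, rfl⟩ := h u
  exact ⟨a ≫ Projective.factorThru b p, by simp⟩

end

theorem homotopy_of_subprojDomain_general
    {R : Type u} [Ring R] (M N : ChainComplex (ModuleCat.{u} R) ℤ)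
    (hMN : SubprojDomain M N)
    (P : ChainComplex (ModuleCat.{u} R) ℤ) (p : P ⟶ N) (hP : Projective P) (hp : Epi p)
    (g : shiftNegOne M ⟶ kernel p) :
    Nonempty (Homotopy g 0) := by
  have hf : (g ≫ kernel.ι p) ≫ p = 0 := by simp
  let s := ChainComplex.nullHomotopyOfProjective (g ≫ kernel.ι p)
  obtain ⟨v, hv⟩ := hMN.exists_lift p (chainMapOfNullHomotopy s p hf)
  exact ⟨(s.trans (nullHomotopyOfChainMap v).symm).ofCompKernelι
    (trans_symm_nullHomotopyOfChainMap_hom_comp_eq_zero s hf hv)⟩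

/-- if `N_n` is in the subprojectivity domain of `M_n` for all `n`, and `N` is
in the subprojectivity domain of `M` as complexes, then for every short exact sequence
`0 → K → P → N → 0` with `P` projective, every chain map `M[-1] → K` is null-homotopic. -/
theorem homotopy_of_subprojDomain
    {R : Type u} [Ring R] (M N : ChainComplex (ModuleCat.{u} R) ℤ)
    (hcomp : ∀ n : ℤ, SubprojDomain (M.X n) (N.X n))
    (hMN : SubprojDomain M N)
    (P : ChainComplex (ModuleCat.{u} R) ℤ) (p : P ⟶ N) (hP : Projective P) (hp : Epi p)
    (g : shiftNegOne M ⟶ kernel p) :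
    Nonempty (Homotopy g 0) :=
  homotopy_of_subprojDomain_general M N hMN P p hP hp g
end

section
/- Let n be an integer, N a chain complex of R-modules, and M an R-module. If N lies in the subprojectivity domain of the sphere complex underline{M}[n] (the complex with M concentrated in degree n), then the n-th cycle module Z_n(N) lies in the subprojectivity domain of M in the category of modules. -/
/-!
Morphisms from the sphere `M[n]` to `N` correspond to morphisms `M ⟶ Z_n(N)`, naturally in `N`,
so it suffices that `Z_n` sends projective complexes to projective modules.

Maps from a complex `P` to the disc on `Y` in degrees `k + 1, k` are the same as maps
`P_k ⟶ Y`, and discs preserve epimorphisms; hence every component of a projective complex is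
projective. The direct sum of the discs on the `P_k` in degrees `k, k - 1` maps onto `P` by a
degreewise split epimorphism; when `P` is projective a section of it exhibits
`d : P_{n+1} ⟶ Z_n(P)` as a split epimorphism, so `Z_n(P)` is a retract of the projective
module `P_{n+1}`.
-/

open CategoryTheory CategoryTheory.Limits

universe u

namespace HomologicalComplex

variable {C : Type*} [Category C] [HasZeroMorphisms C] [HasZeroObject C]
  {ι : Type*} {c : ComplexShape ι}

section

variable {X₀ X₁ : C} {f : X₀ ⟶ X₁} {i₀ i₁ : ι}
  (hi₀₁ : c.Rel i₀ i₁) (h : i₀ ≠ i₁) {K : HomologicalComplex C c}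
  (φ₀ : K.X i₀ ⟶ X₀) (φ₁ : K.X i₁ ⟶ X₁) (comm : K.d i₀ i₁ ≫ φ₁ = φ₀ ≫ f)
  (hφ : ∀ k, c.Rel k i₀ → K.d k i₀ ≫ φ₀ = 0)

open scoped Classical in
noncomputable def mkHomToDouble : K ⟶ double f hi₀₁ where
  f k :=
    if hk₀ : k = i₀ then
      eqToHom (by rw [hk₀]) ≫ φ₀ ≫ (doubleXIso₀ f hi₀₁).inv ≫ eqToHom (by rw [hk₀])
    else if hk₁ : k = i₁ then
      eqToHom (by rw [hk₁]) ≫ φ₁ ≫ (doubleXIso₁ f hi₀₁ h).inv ≫ eqToHom (by rw [hk₁])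
    else 0
  comm' k₀ k₁ hk := by
    by_cases h₁ : k₁ = i₁
    · subst h₁
      obtain rfl := c.prev_eq hk hi₀₁
      simp [dif_neg h.symm, double_d f hi₀₁ h, reassoc_of% comm]
    · by_cases h₀ : k₁ = i₀
      · subst h₀
        simp [reassoc_of% (hφ k₀ hk), double_d_eq_zero₁ f hi₀₁ _ _ h]
      · exact (isZero_double_X f hi₀₁ k₁ h₀ h₁).eq_of_tgt _ _

@[simp]
lemma mkHomToDouble_f₀ :
    (mkHomToDouble hi₀₁ h φ₀ φ₁ comm hφ).f i₀ = φ₀ ≫ (doubleXIso₀ f hi₀₁).inv := by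
  simp [mkHomToDouble]

@[simp]
lemma mkHomToDouble_f₁ :
    (mkHomToDouble hi₀₁ h φ₀ φ₁ comm hφ).f i₁ = φ₁ ≫ (doubleXIso₁ f hi₀₁ h).inv := by
  simp [mkHomToDouble, dif_neg h.symm]

end

lemma projective_X_of_rel {P : HomologicalComplex C c} [Projective P] {i₀ i₁ : ι}
    (hi₀₁ : c.Rel i₀ i₁) (h : i₀ ≠ i₁) : Projective (P.X i₁) := by
  refine ⟨fun {E Y} u e _ => ?_⟩
  let w : P ⟶ double (𝟙 Y) hi₀₁ :=
    mkHomToDouble hi₀₁ h (P.d i₀ i₁ ≫ u) u (by simp) (by simp)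
  let eDouble : double (𝟙 E) hi₀₁ ⟶ double (𝟙 Y) hi₀₁ :=
    mkHomToDouble hi₀₁ h ((doubleXIso₀ _ hi₀₁).hom ≫ e) ((doubleXIso₁ _ hi₀₁ h).hom ≫ e)
      (by simp [double_d _ _ h]) (fun k _ => by simp [double_d_eq_zero₁ _ hi₀₁ k i₀ h])
  have : Epi eDouble := epi_of_epi_f _ fun k => by
    by_cases h₀ : k = i₀
    · subst h₀; simp only [eDouble, mkHomToDouble_f₀]; infer_instance
    by_cases h₁ : k = i₁
    · subst h₁; simp only [eDouble, mkHomToDouble_f₁]; infer_instance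
    exact (isZero_double_X _ hi₀₁ k h₀ h₁).epi _
  refine ⟨(Projective.factorThru w eDouble).f i₁ ≫ (doubleXIso₁ _ hi₀₁ h).hom, ?_⟩
  have hlift := congr_arg (·.f i₁) (Projective.factorThru_comp w eDouble)
  simp only [comp_f, eDouble, w, mkHomToDouble_f₁] at hlift
  simpa using hlift =≫ (doubleXIso₁ _ hi₀₁ h).hom

end HomologicalComplex

namespace ChainComplex

variable {C : Type*} [Category C] [Preadditive C] [HasBinaryBiproducts C]

noncomputable abbrev discCover (P : ChainComplex C ℤ) : ChainComplex C ℤ :=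
  of (fun k => P.X k ⊞ P.X (k + 1)) (fun _ => biprod.fst ≫ biprod.inr) (by simp)

noncomputable def discCoverπ (P : ChainComplex C ℤ) : discCover P ⟶ P :=
  ofHom (fun k => biprod.desc (𝟙 _) (P.d (k + 1) k)) (fun k => by
    apply biprod.hom_ext' <;> simp [discCover])

instance (P : ChainComplex C ℤ) : Epi (discCoverπ P) :=
  HomologicalComplex.epi_of_epi_f _ fun k =>
    epi_of_epi_fac (show biprod.inl ≫ (discCoverπ P).f k = 𝟙 _ by simp [discCoverπ])

lemma isSplitEpi_toCycles_of_projective (P : ChainComplex C ℤ) [Projective P] (n : ℤ)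
    [P.HasHomology n] : IsSplitEpi (P.toCycles (n + 1) n) := by
  obtain ⟨m, rfl⟩ : ∃ m, n = m + 1 := ⟨n - 1, by omega⟩
  let s : P ⟶ discCover P := Projective.factorThru (𝟙 P) (discCoverπ P)
  have hs : s ≫ discCoverπ P = 𝟙 P := Projective.factorThru_comp _ _
  have hfst : P.iCycles (m + 1) ≫ s.f (m + 1) ≫ biprod.fst = 0 := by
    have := s.comm (m + 1) m =≫ biprod.snd
    simp only [discCover, of_d, Category.assoc, biprod.inr_snd, Category.comp_id] at this
    rw [this, P.iCycles_d_assoc, zero_comp]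
  have hπ : P.iCycles (m + 1) ≫ s.f (m + 1) ≫ (discCoverπ P).f (m + 1) = P.iCycles (m + 1) := by
    simpa using P.iCycles (m + 1) ≫= congr_arg (·.f (m + 1)) hs
  refine ⟨⟨P.iCycles (m + 1) ≫ s.f (m + 1) ≫ biprod.snd, ?_⟩⟩
  rw [← cancel_mono (P.iCycles (m + 1))]
  simp only [discCoverπ, biprod.desc_eq, Preadditive.comp_add, reassoc_of% hfst] at hπ
  simpa using hπ

lemma projective_cycles_of_projective [HasZeroObject C] (P : ChainComplex C ℤ) [Projective P] (n : ℤ)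
    [P.HasHomology n] : Projective (P.cycles n) := by
  have : Projective (P.X (n + 1)) :=
    HomologicalComplex.projective_X_of_rel (c := .down ℤ) (i₀ := n + 1 + 1) rfl (by omega)
  have := isSplitEpi_toCycles_of_projective P n
  exact Retract.projective ⟨section_ (P.toCycles (n + 1) n), _, IsSplitEpi.id _⟩

end ChainComplex

/-- if the complex `N` lies in the subprojectivity domain of the sphere complex
`M` concentrated in degree `n`, then the cycle module `Z_n(N)` lies in the subprojectivity
domain of the module `M`. -/
theorem cycles_subprojDomain_of_sphere
    {R : Type u} [Ring R] (n : ℤ) (N : ChainComplex (ModuleCat.{u} R) ℤ)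
    (M : ModuleCat.{u} R)
    (h : SubprojDomain
      ((HomologicalComplex.single (ModuleCat.{u} R) (ComplexShape.down ℤ) n).obj M) N) :
    SubprojDomain M (N.cycles n) := by
  intro f
  obtain ⟨P, _, a, b, hab⟩ :=
    h (HomologicalComplex.mkHomFromSingle (f ≫ N.iCycles n) (fun _ _ => by simp))
  refine ⟨P.cycles n, ChainComplex.projective_cycles_of_projective P n,
    (HomologicalComplex.singleObjCyclesSelfIso _ n M).inv ≫ HomologicalComplex.cyclesMap a n,
    HomologicalComplex.cyclesMap b n, ?_⟩
  rw [Category.assoc, ← HomologicalComplex.cyclesMap_comp, hab, ← cancel_mono (N.iCycles n)]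
  simp
end

section
/- Let M and N be chain complexes of R-modules such that N_{n+1} lies in the subprojectivity domain of M_n for every integer n. Then N lies in the subprojectivity domain of M (in the category of complexes) if and only if every chain map M → N is null-homotopic, i.e., Hom_{K(R)}(M, N) = 0. -/
/-!
Every chain map out of a sum of disks is null-homotopic, and a projective complex `P` is a
retract of the sum of disks on its own terms (which surjects onto `P`); so projective complexes
are contractible and maps factoring through them are null-homotopic. Conversely, if
`f = d s + s d` and each `s_n : M_n ⟶ N_{n+1}` factors through a projective module `Q_{n+1}`,
then `f` factors through the sum of disks on the `Q`'s. That complex is projective because a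
chain map out of it is the same as a family of maps `Q m ⟶ X_m`, which lift along epimorphisms.
-/

open CategoryTheory CategoryTheory.Limits

universe u

namespace ChainComplex

variable {C : Type*} [Category C] [Preadditive C] [HasBinaryBiproducts C]

/-- The sum of the disks `𝟙 : Q m ⟶ Q m` placed in degrees `m` and `m - 1`. -/
noncomputable abbrev disks (Q : ℤ → C) : ChainComplex C ℤ :=
  of (fun k => Q k ⊞ Q (k + 1)) (fun _ => biprod.fst ≫ biprod.inr) (fun _ => by simp)

namespace disks

variable {Q : ℤ → C}

noncomputable def desc (X : ChainComplex C ℤ) (t : ∀ m, Q m ⟶ X.X m) : disks Q ⟶ X :=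
  ofHom (fun k => biprod.desc (t k) (t (k + 1) ≫ X.d (k + 1) k)) (fun n => by ext <;> simp)

@[simp]
lemma inl_desc_f (X : ChainComplex C ℤ) (t : ∀ m, Q m ⟶ X.X m) (m : ℤ) :
    biprod.inl ≫ (desc X t).f m = t m :=
  biprod.inl_desc _ _

lemma hom_ext {X : ChainComplex C ℤ} {φ ψ : disks Q ⟶ X}
    (h : ∀ m, biprod.inl ≫ φ.f m = biprod.inl ≫ ψ.f m) : φ = ψ := by
  refine HomologicalComplex.hom_ext _ _ fun k => biprod.hom_ext' _ _ (h k) ?_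
  have hinr : (biprod.inr : Q (k + 1) ⟶ (disks Q).X k) =
      biprod.inl ≫ (disks Q).d (k + 1) k := by
    simp
  rw [hinr, Category.assoc, Category.assoc, ← φ.comm, ← ψ.comm, reassoc_of% h (k + 1)]

lemma desc_comp {X Y : ChainComplex C ℤ} (t : ∀ m, Q m ⟶ X.X m) (g : X ⟶ Y) :
    desc X t ≫ g = desc Y (fun m => t m ≫ g.f m) :=
  hom_ext fun m => by simp [reassoc_of% inl_desc_f X t m]

lemma desc_eq_nullHomotopicMap' (X : ChainComplex C ℤ) (t : ∀ m, Q m ⟶ X.X m) :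
    desc X t = Homotopy.nullHomotopicMap'
      (fun i j (hij : (ComplexShape.down ℤ).Rel j i) =>
        biprod.snd ≫ eqToHom (congrArg Q hij) ≫ t j) := by
  refine HomologicalComplex.hom_ext _ _ fun k => ?_
  obtain ⟨n, rfl⟩ : ∃ n, k = n + 1 := ⟨k - 1, by omega⟩
  rw [Homotopy.nullHomotopicMap'_f (c := ComplexShape.down ℤ) rfl rfl]
  ext <;> simp [desc]

noncomputable def descHomotopyZero (X : ChainComplex C ℤ) (t : ∀ m, Q m ⟶ X.X m) :
    Homotopy (desc X t) 0 :=
  (Homotopy.ofEq (desc_eq_nullHomotopicMap' X t)).trans (Homotopy.nullHomotopy' _)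

instance [HasFiniteColimits C] [∀ m, Projective (Q m)] : Projective (disks Q) where
  factors g e _ := ⟨desc _ (fun m => Projective.factorThru (biprod.inl ≫ g.f m) (e.f m)),
    hom_ext fun m => by simp [desc_comp]⟩

noncomputable def lift (M : ChainComplex C ℤ) (a : ∀ i j, M.X i ⟶ Q j) : M ⟶ disks Q :=
  ofHom (fun k => biprod.lift (M.d k (k - 1) ≫ a (k - 1) k) (a k (k + 1))) (fun n => by
    ext <;> simp
    rw [add_sub_cancel_right])

lemma lift_comp_desc {M N : ChainComplex C ℤ} {f : M ⟶ N} (σ : Homotopy f 0)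
    {a : ∀ i j, M.X i ⟶ Q j} {b : ∀ j, Q j ⟶ N.X j} (hab : ∀ i j, a i j ≫ b j = σ.hom i j) :
    lift M a ≫ desc N b = f := by
  refine HomologicalComplex.hom_ext _ _ fun k => ?_
  rw [σ.comm k, dNext_eq σ.hom (show (ComplexShape.down ℤ).Rel k (k - 1) by simp),
    prevD_eq σ.hom (show (ComplexShape.down ℤ).Rel (k + 1) k by simp)]
  simp [lift, desc, hab, reassoc_of% hab]

end disks

lemma nonempty_homotopy_id_zero_of_projective (P : ChainComplex C ℤ) [Projective P] :
    Nonempty (Homotopy (𝟙 P) 0) := by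
  let π : disks P.X ⟶ P := disks.desc P fun m => 𝟙 (P.X m)
  have : Epi π :=
    HomologicalComplex.epi_of_epi_f _ fun k => epi_of_epi_fac (disks.inl_desc_f P _ k)
  exact ⟨(Homotopy.ofEq (Projective.factorThru_comp (𝟙 P) π).symm).trans
    (((disks.descHomotopyZero P _).compLeft _).trans (Homotopy.ofEq comp_zero))⟩

end ChainComplex

lemma SubprojDomain.nonempty_homotopy_zero {C : Type*} [Category C] [Preadditive C]
    [HasBinaryBiproducts C] {M N : ChainComplex C ℤ} (hMN : SubprojDomain M N) (f : M ⟶ N) :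
    Nonempty (Homotopy f 0) := by
  obtain ⟨P, _, a, b, rfl⟩ := hMN f
  obtain ⟨H⟩ := ChainComplex.nonempty_homotopy_id_zero_of_projective P
  exact ⟨(Homotopy.ofEq (by simp)).trans
    (((H.compRight b).compLeft a).trans (Homotopy.ofEq (by simp)))⟩

lemma Homotopy.exists_hom_factorization_through_projective {C : Type*} [Category C]
    [Preadditive C] {M N : ChainComplex C ℤ} {f g : M ⟶ N} (σ : Homotopy f g)
    (h : ∀ n, SubprojDomain (M.X n) (N.X (n + 1))) :
    ∃ (Q : ℤ → C) (_ : ∀ j, Projective (Q j)) (a : ∀ i j, M.X i ⟶ Q j) (b : ∀ j, Q j ⟶ N.X j),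
      ∀ i j, a i j ≫ b j = σ.hom i j := by
  have hfactor (j : ℤ) : ∃ (Q : C) (_ : Projective Q) (a : ∀ i, M.X i ⟶ Q) (b : Q ⟶ N.X j),
      ∀ i, a i ≫ b = σ.hom i j := by
    obtain ⟨Q, hQ, a, b, hab⟩ :=
      (by simpa using h (j - 1) : SubprojDomain (M.X (j - 1)) (N.X j)) (σ.hom (j - 1) j)
    -- `σ.hom i j` vanishes unless `i = j - 1`.
    refine ⟨Q, hQ, fun i => if hi : i = j - 1 then eqToHom (congrArg M.X hi) ≫ a else 0, b,
      fun i => ?_⟩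
    dsimp only
    split_ifs with hi
    · subst hi
      simpa using hab
    · rw [zero_comp, σ.zero]
      simp only [ComplexShape.down_Rel]
      omega
  choose Q hQ a b hab using hfactor
  exact ⟨Q, hQ, fun i j => a j i, b, fun i j => hab j i⟩

/-- if `N_{n+1}` lies in the subprojectivity domain of `M_n` for every `n`,
then `N` lies in the subprojectivity domain of `M` iff every chain map `M ⟶ N` is
null-homotopic. -/
theorem subprojDomain_iff_homotopic_to_zero
    {R : Type u} [Ring R] (M N : ChainComplex (ModuleCat.{u} R) ℤ)
    (h : ∀ n : ℤ, SubprojDomain (M.X n) (N.X (n + 1))) :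
    SubprojDomain M N ↔ ∀ f : M ⟶ N, Nonempty (Homotopy f 0) := by
  refine ⟨fun hMN f => hMN.nonempty_homotopy_zero f, fun hf f => ?_⟩
  obtain ⟨σ⟩ := hf f
  obtain ⟨Q, _, a, b, hab⟩ := σ.exists_hom_factorization_through_projective h
  exact ⟨ChainComplex.disks Q, inferInstance, ChainComplex.disks.lift M a,
    ChainComplex.disks.desc N b, ChainComplex.disks.lift_comp_desc σ hab⟩
end

section
/- A ring R is left hereditary if and only if for every R-module M and every exact chain complex N of R-modules, whenever there exists an integer n such that N_n lies in the subprojectivity domain of M, the complex N lies in the subprojectivity domain of the sphere complex underline{M}[n]. -/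
open CategoryTheory CategoryTheory.Limits

universe u

/-- `R` is left hereditary: every submodule of a projective left `R`-module is
projective. -/
def IsLeftHereditary (R : Type u) [Ring R] : Prop :=
  ∀ (P : ModuleCat.{u} R), Projective P →
    ∀ S : Submodule R P, Projective (ModuleCat.of R S)

/-!
A morphism `M[n] ⟶ N` is the same as a map `u : M ⟶ N_n` landing in the cycles `Z_n N`.

If `R` is hereditary and `u = a ≫ b` through a projective `P`, then `b⁻¹(Z_n N) ⊆ P` is
projective, so by exactness `b` restricted to it lifts along `N_{n+1} ↠ Z_n N`; hence the
morphism factors through the disk complex `double (𝟙 X)` on that submodule, which is projective.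

Conversely, for `S ⊆ P` with `P` projective, apply the property to the exact complex
`S → P → P/S` and the inclusion of `S`: it factors through a projective complex `Q`, which
makes `S` a retract of the cycles of `Q`. These are projective: lifting along the epimorphism
`double (𝟙 E) ⟶ Y[i]` induced by an epimorphism `e : E ↠ Y` shows that every `h : Q_i ⟶ Y`
killing the boundaries is `d ≫ g ≫ e` for some `g : Q_{i-1} ⟶ E`. With `e = 𝟙` this gives
exactness of `Q`, and applied to `Q_{i+1} ↠ Z_i Q` it gives the lifting property of `Z_i Q`.
-/

open ZeroObject

theorem subprojDomain_of_projective {A : Type*} [Category A] {M N : A} (hN : Projective N) :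
    SubprojDomain M N :=
  fun f => ⟨N, hN, f, 𝟙 N, Category.comp_id f⟩

namespace HomologicalComplex

variable {C : Type*} [Category C] {ι : Type*} {c : ComplexShape ι} {i j k : ι}

section ZeroMorphisms

variable [HasZeroMorphisms C] [HasZeroObject C]

theorem projective_double_id [HasFiniteColimits C] (hij : c.Rel i j) (hne : i ≠ j) (X : C)
    [Projective X] : Projective (double (𝟙 X) hij) where
  factors {E Y} φ e _ := by
    let ψ : X ⟶ E.X i := Projective.factorThru ((doubleXIso₀ _ hij).inv ≫ φ.f i) (e.f i)
    refine ⟨mkHomFromDouble hij hne ψ (ψ ≫ E.d i j) (by simp) (by simp), ?_⟩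
    ext
    · simp [ψ]
    · rw [comp_f, mkHomFromDouble_f₁, Category.assoc, Category.assoc, ← e.comm,
        Projective.factorThru_comp_assoc, Category.assoc, φ.comm, double_d _ _ hne]
      simp

variable [DecidableEq ι]

theorem exists_double_factorization_of_single {M X : C} {N : HomologicalComplex C c}
    (hij : c.Rel i j) (hne : i ≠ j) (f : (single C c j).obj M ⟶ N) (a : M ⟶ X)
    (g : X ⟶ N.X i) (hf : (singleObjXSelf c j M).inv ≫ f.f j = a ≫ g ≫ N.d i j) :
    ∃ (u : (single C c j).obj M ⟶ double (𝟙 X) hij) (v : double (𝟙 X) hij ⟶ N),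
      u ≫ v = f := by
  refine ⟨mkHomFromSingle (a ≫ (doubleXIso₁ _ hij hne).inv)
      (fun k _ => by rw [double_d_eq_zero₀ _ _ _ _ hne.symm, comp_zero]),
    mkHomFromDouble hij hne g (g ≫ N.d i j) (by simp) (by simp), ?_⟩
  ext
  rw [comp_f, mkHomFromSingle_f, mkHomFromDouble_f₁, ← cancel_epi (singleObjXSelf c j M).inv]
  simp [hf]

noncomputable def doubleToSingle (hij : c.Rel i j) (hne : i ≠ j) {E Y : C} (e : E ⟶ Y) :
    double (𝟙 E) hij ⟶ (single C c i).obj Y :=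
  mkHomFromDouble hij hne (e ≫ (singleObjXSelf c i Y).inv) 0 (by simp) (by simp)

lemma doubleToSingle_f (hij : c.Rel i j) (hne : i ≠ j) {E Y : C} (e : E ⟶ Y) :
    (doubleToSingle hij hne e).f i =
      (doubleXIso₀ (𝟙 E) hij).hom ≫ e ≫ (singleObjXSelf c i Y).inv :=
  mkHomFromDouble_f₀ ..

instance epi_doubleToSingle (hij : c.Rel i j) (hne : i ≠ j) {E Y : C} (e : E ⟶ Y) [Epi e] :
    Epi (doubleToSingle hij hne e) := by
  refine epi_of_epi_f _ fun k => ?_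
  by_cases hk : k = i
  · subst hk
    rw [doubleToSingle_f]
    infer_instance
  · exact (isZero_single_obj_X c i Y k hk).epi _

theorem exists_d_comp_comp_eq_of_projective (Q : HomologicalComplex C c) [Projective Q]
    (hij : c.Rel i j) (hne : i ≠ j) {E Y : C} (e : E ⟶ Y) [Epi e] (h : Q.X i ⟶ Y)
    (hh : ∀ k, c.Rel k i → Q.d k i ≫ h = 0) :
    ∃ g : Q.X j ⟶ E, Q.d i j ≫ g ≫ e = h := by
  obtain ⟨ℓ, hℓ⟩ := Projective.factors (mkHomToSingle h hh) (doubleToSingle hij hne e)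
  refine ⟨ℓ.f j ≫ (doubleXIso₁ (𝟙 E) hij hne).hom, ?_⟩
  have hcomm := ℓ.comm i j
  have hi := congr_hom hℓ i
  rw [double_d _ _ hne] at hcomm
  rw [comp_f, doubleToSingle_f, mkHomToSingle_f] at hi
  simp only [← Category.assoc, cancel_mono] at hi
  rw [Category.assoc, ← reassoc_of% hcomm]
  simpa using hi

end ZeroMorphisms

section Abelian

variable [Abelian C] [DecidableEq ι]

theorem exactAt_of_projective (Q : HomologicalComplex C c) [Projective Q] (hjk : c.Rel j k)
    (hne : j ≠ k) : Q.ExactAt j := by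
  obtain ⟨g, hg⟩ := Q.exists_d_comp_comp_eq_of_projective hjk hne (𝟙 _) (Q.pOpcycles j)
    fun l _ => Q.d_pOpcycles l j
  rw [exactAt_iff, ShortComplex.exact_iff_iCycles_pOpcycles_zero]
  change Q.iCycles j ≫ Q.pOpcycles j = 0
  rw [← hg, Q.iCycles_d_assoc, zero_comp]

theorem projective_cycles_of_projective (Q : HomologicalComplex C c) [Projective Q]
    (hij : c.Rel i j) (hjk : c.Rel j k) (hij' : i ≠ j) (hjk' : j ≠ k) :
    Projective (Q.cycles j) where
  factors {E Y} f e _ := by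
    have : Epi (Q.toCycles i j) := by
      obtain rfl := c.prev_eq' hij
      exact (Q.exactAt_of_projective hjk hjk').epi_toCycles
    obtain ⟨g, hg⟩ := Q.exists_d_comp_comp_eq_of_projective hij hij' e (Q.toCycles i j ≫ f)
      fun l _ => by rw [Q.d_toCycles_assoc, zero_comp]
    refine ⟨Q.iCycles j ≫ g, ?_⟩
    rw [← cancel_epi (Q.toCycles i j), Category.assoc, Q.toCycles_i_assoc]
    exact hg

theorem projective_X_of_single_factorization (N : HomologicalComplex C c) (hij : c.Rel i j)
    (hjk : c.Rel j k) (hij' : i ≠ j) (hjk' : j ≠ k) (hN : N.ExactAt j) [Mono (N.d i j)]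
    {Q : HomologicalComplex C c} [Projective Q] (a : (single C c j).obj (N.X i) ⟶ Q) (b : Q ⟶ N)
    (hab : a ≫ b = mkHomFromSingle (N.d i j) fun k _ => N.d_comp_d i j k) :
    Projective (N.X i) := by
  have := Q.projective_cycles_of_projective hij hjk hij' hjk'
  rw [N.exactAt_iff' i j k (c.prev_eq' hij) (c.next_eq' hjk)] at hN
  have : Mono (N.sc' i j k).f := ‹Mono (N.d i j)›
  let α : N.X i ⟶ Q.X j := (singleObjXSelf c j (N.X i)).inv ≫ a.f j
  have hα : α ≫ Q.d j k = 0 := by simp [α, single_obj_d]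
  have hαb : α ≫ b.f j = N.d i j := by
    have := congr_hom hab j
    rw [comp_f, mkHomFromSingle_f] at this
    simp [α, this]
  let r : Q.cycles j ⟶ N.X i := hN.lift (Q.iCycles j ≫ b.f j) (by
    change (Q.iCycles j ≫ b.f j) ≫ N.d j k = 0
    rw [Category.assoc, b.comm, Q.iCycles_d_assoc, zero_comp])
  have hr : r ≫ N.d i j = Q.iCycles j ≫ b.f j := hN.lift_f _ _
  refine Retract.projective ⟨Q.liftCycles α k (c.next_eq' hjk) hα, r, ?_⟩
  rw [← cancel_mono (N.d i j), Category.assoc, hr, Q.liftCycles_i_assoc, hαb, Category.id_comp]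

end Abelian

end HomologicalComplex

namespace ChainComplex

section

variable {C : Type*} [Category C] [HasZeroMorphisms C] [HasZeroObject C]

noncomputable def ofShortComplex (T : ShortComplex C) : ChainComplex C ℤ where
  X i := if i = 1 then T.X₁ else if i = 0 then T.X₂ else if i = -1 then T.X₃ else 0
  d i j :=
    if h : i = 1 ∧ j = 0 then eqToHom (by rw [h.1]; rfl) ≫ T.f ≫ eqToHom (by rw [h.2]; rfl)
    else if h : i = 0 ∧ j = -1 then
      eqToHom (by rw [h.1]; rfl) ≫ T.g ≫ eqToHom (by rw [h.2]; rfl)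
    else 0
  shape i j hij := by
    rw [dif_neg (by rintro ⟨rfl, rfl⟩; exact hij rfl),
      dif_neg (by rintro ⟨rfl, rfl⟩; exact hij rfl)]
  d_comp_d' i j k hij hjk := by
    simp only [ComplexShape.down_Rel] at hij hjk
    subst hij hjk
    by_cases hk : k = -1
    · subst hk
      simp
    by_cases hk' : k = -2
    · subst hk'
      simp
    have h1 : ¬(k + 1 + 1 = 1 ∧ k + 1 = 0) := by omega
    have h2 : ¬(k + 1 + 1 = 0 ∧ k + 1 = -1) := by omega
    rw [dif_neg h1, dif_neg h2, zero_comp]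

variable (T : ShortComplex C)

@[simp] lemma ofShortComplex_d_one_zero : (ofShortComplex T).d 1 0 = T.f := by
  simp [ofShortComplex]

@[simp] lemma ofShortComplex_d_zero_neg_one : (ofShortComplex T).d 0 (-1) = T.g := by
  simp [ofShortComplex]

lemma isZero_ofShortComplex_X (i : ℤ) (h1 : i ≠ 1) (h0 : i ≠ 0) (h' : i ≠ -1) :
    IsZero ((ofShortComplex T).X i) := by
  simp only [ofShortComplex, if_neg h1, if_neg h0, if_neg h']
  exact isZero_zero C

end

theorem exactAt_ofShortComplex {C : Type*} [Category C] [Abelian C] {T : ShortComplex C}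
    (hT : T.ShortExact) (i : ℤ) : (ofShortComplex T).ExactAt i := by
  by_cases h1 : i = 1
  · subst h1
    rw [HomologicalComplex.exactAt_iff' _ 2 1 0 (by simp) (by simp),
      ShortComplex.exact_iff_mono _
        ((isZero_ofShortComplex_X T 2 (by omega) (by omega) (by omega)).eq_of_src _ _)]
    change Mono ((ofShortComplex T).d 1 0)
    rw [ofShortComplex_d_one_zero]
    exact hT.mono_f
  by_cases h0 : i = 0
  · subst h0
    rw [HomologicalComplex.exactAt_iff' _ 1 0 (-1) (by simp) (by simp)]
    change (ShortComplex.mk ((ofShortComplex T).d 1 0) ((ofShortComplex T).d 0 (-1)) _).Exact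
    simp only [ofShortComplex_d_one_zero, ofShortComplex_d_zero_neg_one]
    exact hT.exact
  by_cases h' : i = -1
  · subst h'
    rw [HomologicalComplex.exactAt_iff' _ 0 (-1) (-2) (by simp) (by simp),
      ShortComplex.exact_iff_epi _
        ((isZero_ofShortComplex_X T (-2) (by omega) (by omega) (by omega)).eq_of_tgt _ _)]
    change Epi ((ofShortComplex T).d 0 (-1))
    rw [ofShortComplex_d_zero_neg_one]
    exact hT.epi_g
  exact HomologicalComplex.ExactAt.of_isZero (isZero_ofShortComplex_X T i h1 h0 h')

end ChainComplex

section Modules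

variable {R : Type u} [Ring R]

theorem HomologicalComplex.range_le_range_d_of_exactAt {ι : Type*} {c : ComplexShape ι}
    {i j k : ι} {N : HomologicalComplex (ModuleCat.{u} R) c} (hij : c.Rel i j) (hjk : c.Rel j k)
    (hN : N.ExactAt j) {M : ModuleCat.{u} R} (u : M ⟶ N.X j) (hu : u ≫ N.d j k = 0) :
    LinearMap.range u.hom ≤ LinearMap.range (N.d i j).hom := by
  rw [N.exactAt_iff' i j k (c.prev_eq' hij) (c.next_eq' hjk),
    ShortComplex.moduleCat_exact_iff] at hN
  rintro _ ⟨x, rfl⟩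
  exact hN (u x) congr($(hu).hom x)

theorem IsLeftHereditary.exists_factorization_of_range_le (hR : IsLeftHereditary R)
    {M Y E : ModuleCat.{u} R} (hMY : SubprojDomain M Y) (u : M ⟶ Y) (p : E ⟶ Y)
    (hup : LinearMap.range u.hom ≤ LinearMap.range p.hom) :
    ∃ (X : ModuleCat.{u} R) (_ : Projective X) (a : M ⟶ X) (g : X ⟶ E),
      a ≫ g ≫ p = u := by
  obtain ⟨P, hP, a, b, rfl⟩ := hMY u
  let S : Submodule R P := (LinearMap.range p.hom).comap b.hom
  have : Module.Projective R S := (IsProjective.iff_projective S).2 (hR P hP S)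
  obtain ⟨g, hg⟩ := Module.projective_lifting_property p.hom.rangeRestrict
    ((b.hom ∘ₗ S.subtype).codRestrict _ fun x => x.2) p.hom.surjective_rangeRestrict
  refine ⟨ModuleCat.of R S, hR P hP S,
    ModuleCat.ofHom (a.hom.codRestrict S fun x => hup ⟨x, rfl⟩), ModuleCat.ofHom g, ?_⟩
  ext x
  exact congr(($hg ⟨a x, hup ⟨x, rfl⟩⟩).val)

end Modules

/-- `R` is left hereditary iff for every module `M` and every exact complex
`N`, whenever there is `n` with `N_n` in the subprojectivity domain of `M`, the complex `N`
lies in the subprojectivity domain of the sphere complex `M` concentrated in degree `n`. -/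
theorem isLeftHereditary_iff_subprojDomain
    {R : Type u} [Ring R] :
    IsLeftHereditary R ↔
      ∀ (M : ModuleCat.{u} R) (N : ChainComplex (ModuleCat.{u} R) ℤ),
        (∀ i : ℤ, N.ExactAt i) →
        ∀ n : ℤ, SubprojDomain M (N.X n) →
          SubprojDomain
            ((HomologicalComplex.single (ModuleCat.{u} R) (ComplexShape.down ℤ) n).obj M)
            N := by
  constructor
  · intro hR M N hN n hMN f
    let u := (HomologicalComplex.singleObjXSelf _ n M).inv ≫ f.f n
    have hu : u ≫ N.d n (n - 1) = 0 := by simp [u, HomologicalComplex.single_obj_d]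
    obtain ⟨X, hX, a, g, hag⟩ := hR.exists_factorization_of_range_le hMN u (N.d (n + 1) n)
      (HomologicalComplex.range_le_range_d_of_exactAt (by simp) (by simp) (hN n) u hu)
    obtain ⟨α, β, hαβ⟩ := HomologicalComplex.exists_double_factorization_of_single
      (show (ComplexShape.down ℤ).Rel (n + 1) n by simp) (by omega) f a g hag.symm
    exact ⟨_, HomologicalComplex.projective_double_id _ (by omega) X, α, β, hαβ⟩
  · intro h P hP S
    let T : ShortComplex (ModuleCat.{u} R) :=
      ShortComplex.mk (ModuleCat.ofHom S.subtype) (ModuleCat.ofHom S.mkQ) (by ext; simp)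
    have hT : T.ShortExact := ModuleCat.shortComplex_shortExact T
      (LinearMap.exact_subtype_mkQ S) S.injective_subtype S.mkQ_surjective
    let N := ChainComplex.ofShortComplex T
    obtain ⟨Q, _, a, b, hab⟩ := h (N.X 1) N (ChainComplex.exactAt_ofShortComplex hT) 0
      (subprojDomain_of_projective hP)
      (HomologicalComplex.mkHomFromSingle (N.d 1 0) fun k _ => N.d_comp_d 1 0 k)
    have : Mono (N.d 1 0) := by rw [ChainComplex.ofShortComplex_d_one_zero]; exact hT.mono_f
    -- `N.X 1` is `ModuleCat.of R S` by definition
    exact N.projective_X_of_single_factorization (k := -1) (by simp) (by simp) (by omega)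
      (by omega) (ChainComplex.exactAt_ofShortComplex hT 0) a b hab
end
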